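/- For all natural numbers n ≥ 1, mset_pair(2^{2^n} + 1, 2^{2^n} + 1) = 2^{2^{n+1}} + 1; in particular if all Fermat primes other than 3, 5, 17, 257, 65537 fail to exist is false (i.e., some larger Fermat prime exists), then there exists a Fermat prime that is not an mset_unpair hyper-prime. -/

import Mathlib

/-- The set of positions of 1-bits in the binary representation of `n`. -/
def nat2set (n : ℕ) : Finset ℕ := (Finset.range n).filter (fun k => n.testBit k)

/-- Bit-interleaving pairing. -/
def bitpair (p : ℕ × ℕ) : ℕ :=
  (∑ k ∈ nat2set p.1, 2 ^ (2 * k)) + ∑ k ∈ nat2set p.2, 2 ^ (2 * k + 1)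

/-- Pairing on 2-element multisets of naturals. -/
def mset_pair (p : ℕ × ℕ) : ℕ :=
  bitpair (min p.1 p.2, max p.1 p.2 - min p.1 p.2)

/-- `m` appears in the tree of recursive applications of `mset_unpair`
(the inverse of `mset_pair`) starting at `p`. -/
inductive Reach : ℕ → ℕ → Prop
  | refl (p : ℕ) : Reach p p
  | left (p n a b : ℕ) : Reach p n → 1 < n → mset_pair (a, b) = n → Reach p a
  | right (p n a b : ℕ) : Reach p n → 1 < n → mset_pair (a, b) = n → Reach p b

/-- A hyper-prime: a prime all of whose recursive `mset_unpair` components are prime. -/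
def HyperPrime (p : ℕ) : Prop := p.Prime ∧ ∀ m : ℕ, Reach p m → m.Prime

/-- A Fermat prime: a prime of the form `2^(2^n) + 1` with `n > 0`. -/
def FermatPrime (p : ℕ) : Prop := ∃ n : ℕ, 0 < n ∧ p = 2 ^ 2 ^ n + 1 ∧ p.Prime

/-!
Since `mset_pair (x, x) = bitpair (x, 0)` spreads the bits of `x` to the even positions, the
Fermat number `F n = 2 ^ 2 ^ n + 1`, with bits `0` and `2 ^ n`, is sent to `F (n + 1)`.
Hence unpairing `F (n + 1)` yields `F n`, and the `mset_unpair` tree of any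
Fermat prime `F n` with `n ≥ 5` contains the composite `F 5 = 641 * 6700417`.
-/

open Nat (fermatNumber two_lt_fermatNumber)

lemma mem_nat2set {n k : ℕ} : k ∈ nat2set n ↔ n.testBit k := by
  simp only [nat2set, Finset.mem_filter, Finset.mem_range, and_iff_right_iff_imp]
  exact fun h => Nat.lt_of_lt_of_le Nat.lt_two_pow_self (Nat.ge_two_pow_of_testBit h)

lemma nat2set_two_pow_add {m x : ℕ} (hx : x < 2 ^ m) :
    nat2set (2 ^ m + x) = insert m (nat2set x) := by
  ext k
  have hor : 2 ^ m + x = 2 ^ m ||| x := by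
    simpa using Nat.two_pow_add_eq_or_of_lt hx 1
  rw [Finset.mem_insert, mem_nat2set, mem_nat2set, hor, Nat.testBit_or, Nat.testBit_two_pow,
    Bool.or_eq_true, decide_eq_true_eq, eq_comm]

lemma nat2set_one : nat2set 1 = {0} := by decide

lemma mset_pair_self (x : ℕ) : mset_pair (x, x) = ∑ k ∈ nat2set x, 2 ^ (2 * k) := by
  simp [mset_pair, bitpair, nat2set]

lemma mset_pair_fermatNumber_self (n : ℕ) :
    mset_pair (fermatNumber n, fermatNumber n) = fermatNumber (n + 1) := by
  have hne : 2 ^ n ∉ nat2set 1 := by simp [nat2set_one]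
  rw [mset_pair_self, fermatNumber, nat2set_two_pow_add (Nat.one_lt_two_pow (by positivity)),
    Finset.sum_insert hne, nat2set_one, Finset.sum_singleton, fermatNumber, pow_succ', mul_zero,
    pow_zero]

lemma Reach.trans {p q r : ℕ} (hpq : Reach p q) (hqr : Reach q r) : Reach p r := by
  induction hqr with
  | refl => exact hpq
  | left n a b _ hn hab ih => exact .left p n a b ih hn hab
  | right n a b _ hn hab ih => exact .right p n a b ih hn hab

lemma reach_fermatNumber_succ (n : ℕ) : Reach (fermatNumber (n + 1)) (fermatNumber n) :=
  .left _ _ _ _ (.refl _) (by have := two_lt_fermatNumber (n + 1); omega)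
    (mset_pair_fermatNumber_self n)

lemma reach_fermatNumber_of_le {m n : ℕ} (hmn : m ≤ n) :
    Reach (fermatNumber n) (fermatNumber m) := by
  induction n, hmn using Nat.le_induction with
  | base => exact .refl _
  | succ n _ ih => exact (reach_fermatNumber_succ n).trans ih

lemma not_prime_fermatNumber_five : ¬ (fermatNumber 5).Prime := by
  norm_num [fermatNumber]

/-- `mset_pair(2^(2^n)+1, 2^(2^n)+1) = 2^(2^(n+1))+1` for `n ≥ 1`; consequently,
if there is a Fermat prime other than 3, 5, 17, 257, 65537, then some Fermat
prime is not an `mset_unpair` hyper-prime. -/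
theorem fermat_hyper_primes :
    (∀ n : ℕ, 1 ≤ n →
      mset_pair (2 ^ 2 ^ n + 1, 2 ^ 2 ^ n + 1) = 2 ^ 2 ^ (n + 1) + 1) ∧
    ((∃ p : ℕ, FermatPrime p ∧ p ∉ ({3, 5, 17, 257, 65537} : Set ℕ)) →
      ∃ p : ℕ, FermatPrime p ∧ ¬HyperPrime p) := by
  refine ⟨fun n _ => mset_pair_fermatNumber_self n, ?_⟩
  rintro ⟨p, hp, hp_new⟩
  obtain ⟨n, hn, rfl, -⟩ := id hp
  have hn5 : 5 ≤ n := by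
    by_contra! h
    interval_cases n <;> exact hp_new (by norm_num)
  exact ⟨_, hp, fun ⟨_, hreach⟩ =>
    not_prime_fermatNumber_five (hreach _ (reach_fermatNumber_of_le hn5))⟩
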